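/- arXiv:1910.10867 — 7 statements merged into one kernel-verified Lean document; each statement's English description precedes it below -/
import Mathlib

section
/- Let h ≥ 1 and let λ_1, …, λ_h be distinct complex numbers, none of which is an uncontrollable eigenvalue of (A,B). Then dim(V(λ_1) + V(λ_2) + ⋯ + V(λ_h)) = dim(Σ_{k=0}^{h−1} A^k(range B)); that is, the dimension of the sum of the pencil subspaces equals the rank of the matrix [B, AB, …, A^{h−1}B]. -/
/-
Put `q = ∏ᵢ (X - μᵢ)`, `h = #ι`, `Kₕ = Σ_{k<h} fᵏ U` and let `V(μ) = (f - μ)⁻¹ U` be the pencil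
subspaces. The map `x ↦ q(f) x mod Kₕ` is onto, by induction on the factors of `q`, since every
`range (f - μᵢ) + U` is the whole space. Its kernel is `Σᵢ V(μᵢ)`: for `x ∈ V(μᵢ)`,
`q(f) x = qᵢ(f) (f - μᵢ) x` with `deg qᵢ < h`; conversely, if `q(f) x ∈ Kₕ`, the Lagrange
decomposition `x = Σᵢ Lᵢ(f) x` becomes a decomposition along the `V(μᵢ)` after corrections that sum
to zero by the partial fraction identity `Σᵢ cᵢ (p - p(μᵢ)) / (X - μᵢ) = 0` (`deg p < h`, `cᵢ` the
nodal weights). Hence `V / Σᵢ V(μᵢ) ≃ V / Kₕ`.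
-/

open Matrix Submodule

/-- The pencil subspace `V(λ)`: projection onto the first `n` coordinates of the
kernel of `[A - λI, B]`, i.e. `{x | ∃ u, (A - λI) x + B u = 0}`. -/
noncomputable def pencilSub {n m : ℕ} (A : Matrix (Fin n) (Fin n) ℂ)
    (B : Matrix (Fin n) (Fin m) ℂ) (lam : ℂ) : Submodule ℂ (Fin n → ℂ) :=
  Submodule.map (LinearMap.fst ℂ (Fin n → ℂ) (Fin m → ℂ))
    (LinearMap.ker (((A - lam • 1).mulVecLin).coprod B.mulVecLin))

/-- `λ` is an uncontrollable eigenvalue of `(A, B)` if `(x, u) ↦ (A - λI) x + B u`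
is not surjective. -/
def IsUncontrollableEig {n m : ℕ} (A : Matrix (Fin n) (Fin n) ℂ)
    (B : Matrix (Fin n) (Fin m) ℂ) (lam : ℂ) : Prop :=
  ¬ Function.Surjective (((A - lam • 1).mulVecLin).coprod B.mulVecLin)

/-- The `h`-step Krylov subspace `Σ_{k=0}^{h-1} A^k (range B)`. -/
noncomputable def krylov {n m : ℕ} (A : Matrix (Fin n) (Fin n) ℂ)
    (B : Matrix (Fin n) (Fin m) ℂ) (h : ℕ) : Submodule ℂ (Fin n → ℂ) :=
  ⨆ k ∈ Finset.range h, Submodule.map (A.mulVecLin ^ k) (LinearMap.range B.mulVecLin)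

open Polynomial Lagrange

section LagrangePolynomial

variable {K ι : Type*} [Field K] [Fintype ι] [DecidableEq ι]

theorem Lagrange.X_sub_C_mul_basis (μ : ι → K) (i : ι) :
    (X - C (μ i)) * Lagrange.basis Finset.univ μ i =
      C (nodalWeight Finset.univ μ i) * nodal Finset.univ μ := by
  rw [basis_eq_prod_sub_inv_mul_nodal_div (Finset.mem_univ i),
    ← nodal_erase_eq_nodal_div (Finset.mem_univ i), nodal_eq_mul_nodal_erase (Finset.mem_univ i)]
  ring

theorem Lagrange.sum_nodalWeight_smul_divByMonic_eq_zero {μ : ι → K}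
    (hμ : Function.Injective μ) {p : K[X]} (hp : p.degree < Fintype.card ι) :
    ∑ i, nodalWeight Finset.univ μ i • (p /ₘ (X - C (μ i))) = 0 := by
  rcases isEmpty_or_nonempty ι with hι | hι
  · exact Finset.sum_of_isEmpty _
  refine (mul_right_injective₀ (nodal_ne_zero (s := Finset.univ) (v := μ))) ?_
  have hinterp := eq_interpolate (s := Finset.univ) hμ.injOn hp
  calc nodal Finset.univ μ * ∑ i, nodalWeight Finset.univ μ i • (p /ₘ (X - C (μ i)))
      = ∑ i, Lagrange.basis Finset.univ μ i * ((X - C (μ i)) * (p /ₘ (X - C (μ i)))) := by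
        simp only [Finset.mul_sum, smul_eq_C_mul]
        refine Finset.sum_congr rfl fun i _ => ?_
        linear_combination -(p /ₘ (X - C (μ i))) * X_sub_C_mul_basis μ i
    _ = p * ∑ i, Lagrange.basis Finset.univ μ i -
          interpolate Finset.univ μ (fun i => p.eval (μ i)) := by
        simp only [X_sub_C_mul_divByMonic_eq_sub_modByMonic, modByMonic_X_sub_C_eq_C_eval,
          interpolate_apply, Finset.mul_sum, ← Finset.sum_sub_distrib]
        refine Finset.sum_congr rfl fun i _ => ?_
        ring
    _ = nodal Finset.univ μ * 0 := by
        rw [sum_basis hμ.injOn Finset.univ_nonempty, ← hinterp]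
        ring

end LagrangePolynomial

section Krylov

variable {K V : Type*} [Field K] [AddCommGroup V] [Module K V] (f : Module.End K V)
  (U : Submodule K V)

def krylovSubspace (h : ℕ) : Submodule K V :=
  ⨆ k ∈ Finset.range h, U.map (f ^ k)

theorem mem_krylovSubspace_iff {h : ℕ} {y : V} :
    y ∈ krylovSubspace f U h ↔
      ∃ u : ℕ → V, (∀ k, u k ∈ U) ∧ ∑ k ∈ Finset.range h, (f ^ k) (u k) = y := by
  rw [krylovSubspace, Submodule.mem_iSup_finset_iff_exists_sum]
  constructor
  · rintro ⟨w, rfl⟩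
    choose u hu hfu using fun k => Submodule.mem_map.1 (w k).2
    exact ⟨u, hu, Finset.sum_congr rfl fun k _ => hfu k⟩
  · rintro ⟨u, hu, rfl⟩
    exact ⟨fun k => ⟨(f ^ k) (u k), Submodule.mem_map_of_mem (hu k)⟩, rfl⟩

theorem krylovSubspace_zero : krylovSubspace f U 0 = ⊥ := by
  simp [krylovSubspace]

theorem aeval_apply_mem_krylovSubspace {h : ℕ} {p : K[X]} (hp : p.natDegree < h) {u : V}
    (hu : u ∈ U) : aeval f p u ∈ krylovSubspace f U h := by
  rw [mem_krylovSubspace_iff]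
  refine ⟨fun k => p.coeff k • u, fun k => U.smul_mem _ hu, ?_⟩
  simp [aeval_eq_sum_range' hp, LinearMap.sum_apply]

theorem map_aeval_krylovSubspace_le (p : K[X]) (h : ℕ) :
    (krylovSubspace f U h).map (aeval f p) ≤ krylovSubspace f U (h + p.natDegree) := by
  rintro _ ⟨y, hy, rfl⟩
  obtain ⟨u, hu, rfl⟩ := (mem_krylovSubspace_iff f U).1 hy
  rw [map_sum]
  refine Submodule.sum_mem _ fun k hk => ?_
  rw [← Module.End.mul_apply, ← aeval_X_pow (R := K) f, ← map_mul]
  refine aeval_apply_mem_krylovSubspace f U ?_ (hu k)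
  have hk : k < h := Finset.mem_range.1 hk
  calc (p * X ^ k).natDegree ≤ p.natDegree + k := natDegree_mul_le.trans (by simp)
    _ < h + p.natDegree := by omega

theorem aeval_X_sub_C_eq_sub_smul_one (a : K) : aeval f (X - C a) = f - a • 1 := by
  simp [Algebra.algebraMap_eq_smul_one]

theorem sub_smul_one_mul_aeval_divByMonic (p : K[X]) (a : K) :
    (f - a • 1) * aeval f (p /ₘ (X - C a)) = aeval f p - p.eval a • 1 := by
  rw [← aeval_X_sub_C_eq_sub_smul_one, ← map_mul, X_sub_C_mul_divByMonic_eq_sub_modByMonic,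
    modByMonic_X_sub_C_eq_C_eval, map_sub, aeval_C, Algebra.algebraMap_eq_smul_one]

theorem range_aeval_nodal_sup_krylovSubspace {ι : Type*} {μ : ι → K}
    (hμ : ∀ i, LinearMap.range (f - μ i • 1) ⊔ U = ⊤) (s : Finset ι) :
    LinearMap.range (aeval f (nodal s μ)) ⊔ krylovSubspace f U s.card = ⊤ := by
  classical
  induction s using Finset.induction_on with
  | empty => simp [nodal_empty, Module.End.one_eq_id]
  | insert i s hi ih =>
    rw [nodal_insert_eq_nodal hi, Finset.card_insert_of_notMem hi, eq_top_iff]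
    calc ⊤ = (LinearMap.range (aeval f (nodal s μ)) ⊔ krylovSubspace f U s.card).map
          (f - μ i • 1) ⊔ U := by rw [ih, Submodule.map_top, hμ i]
      _ ≤ _ := by
        rw [Submodule.map_sup]
        refine sup_le (sup_le ?_ ?_) ?_
        · rw [← LinearMap.range_comp, map_mul, aeval_X_sub_C_eq_sub_smul_one]
          exact le_sup_left
        · refine le_sup_of_le_right ?_
          have := map_aeval_krylovSubspace_le f U (X - C (μ i)) s.card
          rwa [aeval_X_sub_C_eq_sub_smul_one, natDegree_X_sub_C] at this
        · refine le_sup_of_le_right fun u hu => ?_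
          simpa using aeval_apply_mem_krylovSubspace f U (p := 1) (by simp) hu

end Krylov

section Pencil

variable {K V ι : Type*} [Field K] [AddCommGroup V] [Module K V] [Fintype ι]
  (f : Module.End K V) (U : Submodule K V) {μ : ι → K}

theorem exists_sum_eq_zero_sub_nodalWeight_smul_mem [DecidableEq ι] (hμ : Function.Injective μ)
    {y : V} (hy : y ∈ krylovSubspace f U (Fintype.card ι)) :
    ∃ z : ι → V, ∑ i, z i = 0 ∧
      ∀ i, (f - μ i • 1) (z i) - nodalWeight Finset.univ μ i • y ∈ U := by
  obtain ⟨u, hu, rfl⟩ := (mem_krylovSubspace_iff f U).1 hy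
  refine ⟨fun i => ∑ k ∈ Finset.range (Fintype.card ι),
    nodalWeight Finset.univ μ i • aeval f (X ^ k /ₘ (X - C (μ i))) (u k), ?_, fun i => ?_⟩
  · rw [Finset.sum_comm]
    refine Finset.sum_eq_zero fun k hk => ?_
    have hdeg : (X ^ k : K[X]).degree < Fintype.card ι := by
      rw [degree_X_pow]
      exact_mod_cast Finset.mem_range.1 hk
    have hsum := sum_nodalWeight_smul_divByMonic_eq_zero hμ hdeg
    simpa [map_sum, LinearMap.sum_apply] using congrArg (fun p => aeval f p (u k)) hsum
  · rw [map_sum, Finset.smul_sum, ← Finset.sum_sub_distrib]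
    refine Submodule.sum_mem _ fun k _ => ?_
    rw [map_smul, ← Module.End.mul_apply, sub_smul_one_mul_aeval_divByMonic, aeval_X_pow,
      eval_pow, eval_X, LinearMap.sub_apply, LinearMap.smul_apply, Module.End.one_apply, smul_sub,
      sub_sub_cancel_left]
    exact U.neg_mem (U.smul_mem _ (U.smul_mem _ (hu k)))

theorem comap_aeval_nodal_krylovSubspace (hμ : Function.Injective μ) :
    (krylovSubspace f U (Fintype.card ι)).comap (aeval f (nodal Finset.univ μ)) =
      ⨆ i, U.comap (f - μ i • 1) := by
  classical
  refine le_antisymm (fun x hx => ?_) (iSup_le fun i x hx => ?_)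
  · rcases isEmpty_or_nonempty ι with hι | hι
    · simp_all [krylovSubspace_zero]
    obtain ⟨z, hz, hzU⟩ := exists_sum_eq_zero_sub_nodalWeight_smul_mem f U hμ hx
    have hsum : ∑ i, (aeval f (Lagrange.basis Finset.univ μ i) x - z i) = x := by
      rw [Finset.sum_sub_distrib, hz, sub_zero, ← LinearMap.sum_apply, ← map_sum,
        sum_basis hμ.injOn Finset.univ_nonempty, map_one, Module.End.one_apply]
    rw [← hsum]
    refine Submodule.sum_mem _ fun i _ => Submodule.mem_iSup_of_mem i ?_
    have hbasis : (f - μ i • 1) (aeval f (Lagrange.basis Finset.univ μ i) x) =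
        nodalWeight Finset.univ μ i • aeval f (nodal Finset.univ μ) x := by
      rw [← Module.End.mul_apply, ← aeval_X_sub_C_eq_sub_smul_one, ← map_mul, X_sub_C_mul_basis,
        ← smul_eq_C_mul, map_smul, LinearMap.smul_apply]
    rw [Submodule.mem_comap, map_sub, hbasis, ← neg_sub]
    exact U.neg_mem (hzU i)
  · rw [Submodule.mem_comap, nodal_eq_mul_nodal_erase (Finset.mem_univ i), mul_comm, map_mul,
      Module.End.mul_apply, aeval_X_sub_C_eq_sub_smul_one]
    refine aeval_apply_mem_krylovSubspace f U ?_ hx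
    rw [natDegree_nodal, Finset.card_erase_of_mem (Finset.mem_univ i), Finset.card_univ]
    exact Nat.sub_lt (Fintype.card_pos_iff.2 ⟨i⟩) one_pos

theorem finrank_iSup_comap_eq_finrank_krylovSubspace [FiniteDimensional K V]
    (hμ : Function.Injective μ) (hU : ∀ i, LinearMap.range (f - μ i • 1) ⊔ U = ⊤) :
    Module.finrank K ↥(⨆ i, U.comap (f - μ i • 1)) =
      Module.finrank K (krylovSubspace f U (Fintype.card ι)) := by
  set g := (krylovSubspace f U (Fintype.card ι)).mkQ ∘ₗ aeval f (nodal Finset.univ μ)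
  have hker : LinearMap.ker g = ⨆ i, U.comap (f - μ i • 1) := by
    rw [LinearMap.ker_comp, Submodule.ker_mkQ, comap_aeval_nodal_krylovSubspace f U hμ]
  have hrange : LinearMap.range g = ⊤ := by
    rw [LinearMap.range_comp, Submodule.map_mkQ_eq_top, sup_comm, ← Finset.card_univ]
    exact range_aeval_nodal_sup_krylovSubspace f U hU Finset.univ
  have hg := g.finrank_range_add_finrank_ker
  rw [hker, hrange, finrank_top] at hg
  have hquot := Submodule.finrank_quotient_add_finrank (krylovSubspace f U (Fintype.card ι))
  omega

end Pencil

theorem LinearMap.map_fst_ker_coprod {R M M' N : Type*} [Semiring R] [AddCommMonoid M]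
    [AddCommGroup M'] [AddCommGroup N] [Module R M] [Module R M'] [Module R N]
    (g : M →ₗ[R] N) (k : M' →ₗ[R] N) :
    (LinearMap.ker (g.coprod k)).map (LinearMap.fst R M M') = (LinearMap.range k).comap g := by
  ext x
  constructor
  · rintro ⟨⟨x, u⟩, hxu, rfl⟩
    exact ⟨-u, by rw [map_neg, neg_eq_iff_add_eq_zero, add_comm]; exact hxu⟩
  · rintro ⟨u, hu⟩
    exact ⟨(x, -u), by simp [hu], rfl⟩

theorem dim_sum_pencil_eq_dim_krylov_general (n m : ℕ)
    (A : Matrix (Fin n) (Fin n) ℂ) (B : Matrix (Fin n) (Fin m) ℂ)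
    (h : ℕ) (lam : Fin h → ℂ)
    (hdist : Function.Injective lam)
    (hctrl : ∀ i, ¬ IsUncontrollableEig A B (lam i)) :
    Module.finrank ℂ ↥(⨆ i, pencilSub A B (lam i)) =
      Module.finrank ℂ ↥(krylov A B h) := by
  have hlin (c : ℂ) : (A - c • 1).mulVecLin = A.mulVecLin - c • 1 := by
    refine LinearMap.ext fun x => ?_
    simp
  have hpencil (i : Fin h) : pencilSub A B (lam i) =
      (LinearMap.range B.mulVecLin).comap (A.mulVecLin - lam i • 1) := by
    rw [pencilSub, LinearMap.map_fst_ker_coprod, hlin]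
  have hsurj (i : Fin h) :
      LinearMap.range (A.mulVecLin - lam i • 1) ⊔ LinearMap.range B.mulVecLin = ⊤ := by
    rw [← hlin, ← LinearMap.range_coprod, LinearMap.range_eq_top]
    exact not_not.1 (hctrl i)
  rw [iSup_congr hpencil, finrank_iSup_comap_eq_finrank_krylovSubspace _ _ hdist hsurj,
    Fintype.card_fin]
  rfl

theorem dim_sum_pencil_eq_dim_krylov (n m : ℕ) (hn : 0 < n) (hm : 0 < m)
    (A : Matrix (Fin n) (Fin n) ℂ) (B : Matrix (Fin n) (Fin m) ℂ)
    (h : ℕ) (hh : 1 ≤ h) (lam : Fin h → ℂ)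
    (hdist : Function.Injective lam)
    (hctrl : ∀ i, ¬ IsUncontrollableEig A B (lam i)) :
    Module.finrank ℂ ↥(⨆ i, pencilSub A B (lam i)) =
      Module.finrank ℂ ↥(krylov A B h) :=
  dim_sum_pencil_eq_dim_krylov_general n m A B h lam hdist hctrl
end

section
/- Let h ≥ 1 and let λ_1, …, λ_h be distinct complex numbers, none of which is an uncontrollable eigenvalue of (A,B). If moreover Σ_{k=0}^{h−1} A^k(range B) = ℛ (the reachable subspace; this holds in particular whenever h ≥ n), then V(λ_1) + V(λ_2) + ⋯ + V(λ_h) = ℛ. -/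
/-!
If `λ` is not an uncontrollable eigenvalue, `A - λ` induces a surjective, hence bijective, map on
`ℂⁿ / ℛ`, so `(A - λ) x ∈ range B ⊆ ℛ` forces `x ∈ ℛ`; this gives `V(λ) ⊆ ℛ`.

Conversely, a functional `φ` vanishing on `V(λᵢ)` factors as `φ = zᵢ ∘ (A - λᵢ)` with
`zᵢ ∘ B = 0`. With the barycentric weights `wᵢ = ∏_{j ≠ i} (λᵢ - λⱼ)⁻¹`, the functional
`w = Σ wᵢ zᵢ` kills `A^k B` for `k < h`, because `Σ wᵢ λᵢ^d = 0` for `d < h - 1`; hence `w`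
kills the Krylov space, which is `ℛ`. Since `Σ wᵢ ∏_{j ≠ i} (X - λⱼ) = 1`, we get `φ = w ∘ q(A)` for
`q = ∏ (X - λᵢ)`, and `ℛ` is `A`-invariant, so `φ` kills `ℛ`.
-/

open Matrix Submodule

/-- The reachable subspace `ℛ`: the smallest `A`-invariant subspace containing `range B`. -/
noncomputable def reachSub {n m : ℕ} (A : Matrix (Fin n) (Fin n) ℂ)
    (B : Matrix (Fin n) (Fin m) ℂ) : Submodule ℂ (Fin n → ℂ) :=
  sInf {W : Submodule ℂ (Fin n → ℂ) |
    LinearMap.range B.mulVecLin ≤ W ∧ Submodule.map A.mulVecLin W ≤ W}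

open Polynomial Lagrange

theorem Lagrange.sum_nodalWeight_mul_pow_eq_zero {K ι : Type*} [Field K] [DecidableEq ι]
    {s : Finset ι} {v : ι → K} (hvs : Set.InjOn v s) {d : ℕ} (hd : d + 1 < s.card) :
    ∑ i ∈ s, nodalWeight s v i * v i ^ d = 0 := by
  have hdeg : (X ^ d : K[X]).degree < s.card := by
    rw [degree_X_pow]; exact_mod_cast (by omega : d < s.card)
  have := coeff_eq_sum hvs hdeg
  rw [coeff_X_pow, if_neg (by omega)] at this
  simp_rw [this, nodalWeight, Finset.prod_inv_distrib, eval_pow, eval_X, div_eq_mul_inv, mul_comm]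

section LinearMap

variable {K E F : Type*} [Field K] [AddCommGroup E] [Module K E] [AddCommGroup F] [Module K F]

theorem Submodule.mapQ_surjective_of_coprod_surjective {T : E →ₗ[K] E} {g : F →ₗ[K] E}
    {R : Submodule K E} (hTR : R ≤ R.comap T) (hgR : LinearMap.range g ≤ R)
    (hsurj : Function.Surjective (T.coprod g)) : Function.Surjective (R.mapQ R T hTR) := by
  intro y
  obtain ⟨y, rfl⟩ := R.mkQ_surjective y
  obtain ⟨⟨x, u⟩, rfl⟩ := hsurj y
  refine ⟨R.mkQ x, ?_⟩
  simp [(Quotient.mk_eq_zero R).mpr (hgR ⟨u, rfl⟩)]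

theorem Submodule.le_comap_sub_smul_one {f : Module.End K E} {R : Submodule K E}
    (hRf : R ≤ R.comap f) (c : K) : R ≤ R.comap (f - c • 1) :=
  fun x hx => show f x - c • x ∈ R from sub_mem (hRf hx) (R.smul_mem c hx)

theorem map_fst_ker_coprod_le [FiniteDimensional K E] {T : E →ₗ[K] E} {g : F →ₗ[K] E}
    {R : Submodule K E} (hTR : R ≤ R.comap T) (hgR : LinearMap.range g ≤ R)
    (hsurj : Function.Surjective (T.coprod g)) :
    (LinearMap.ker (T.coprod g)).map (LinearMap.fst K E F) ≤ R := by
  have hinj : Function.Injective (R.mapQ R T hTR) := LinearMap.injective_iff_surjective.mpr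
    (Submodule.mapQ_surjective_of_coprod_surjective hTR hgR hsurj)
  rintro _ ⟨⟨x, u⟩, hxu, rfl⟩
  have hTx : T x ∈ R := by
    rw [eq_neg_of_add_eq_zero_left (show T x + g u = 0 from hxu)]
    exact neg_mem (hgR ⟨u, rfl⟩)
  rw [← Submodule.Quotient.mk_eq_zero] at hTx ⊢
  exact hinj (by simpa using hTx)

theorem exists_dual_comp_eq_of_coprod_surjective {T : E →ₗ[K] E} {g : F →ₗ[K] E}
    (hsurj : Function.Surjective (T.coprod g)) {φ : Module.Dual K E}
    (hφ : ∀ x ∈ (LinearMap.ker (T.coprod g)).map (LinearMap.fst K E F), φ x = 0) :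
    ∃ z : Module.Dual K E, z ∘ₗ T = φ ∧ z ∘ₗ g = 0 := by
  set S := T.coprod g
  have hker : LinearMap.ker S ≤ LinearMap.ker (φ ∘ₗ LinearMap.fst K E F) :=
    fun p hp => hφ p.1 ⟨p, hp, rfl⟩
  set z := (LinearMap.ker S).liftQ _ hker ∘ₗ (S.quotKerEquivOfSurjective hsurj).symm.toLinearMap
  have hzS : ∀ p, z (S p) = φ p.1 := fun p => by
    rw [← LinearMap.quotKerEquivOfSurjective_apply_mk S hsurj]
    simp [z]
  refine ⟨z, LinearMap.ext fun x => ?_, LinearMap.ext fun u => ?_⟩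
  · simpa [S] using hzS (x, 0)
  · simpa [S] using hzS (0, u)

variable {f : Module.End K E} {g : F →ₗ[K] E} {φ : Module.Dual K E}

theorem Module.Dual.apply_pow_apply_eq_sum {z : Module.Dual K E} {c : K}
    (hzf : z ∘ₗ (f - c • 1) = φ) (hzg : z ∘ₗ g = 0) (k : ℕ) (u : F) :
    z ((f ^ k) (g u)) = ∑ j ∈ Finset.range k, c ^ (k - 1 - j) * φ ((f ^ j) (g u)) := by
  have hcomm : Commute f (c • 1) := (Commute.one_right f).smul_right c
  have hzgu : z (g u) = 0 := LinearMap.congr_fun hzg u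
  calc z ((f ^ k) (g u)) = z ((f ^ k - (c • 1) ^ k) (g u)) := by
        simp [_root_.smul_pow, hzgu]
    _ = φ ((∑ j ∈ Finset.range k, f ^ j * (c • 1) ^ (k - 1 - j)) (g u)) := by
        rw [← hcomm.mul_geom_sum₂, ← hzf, Module.End.mul_apply]; rfl
    _ = ∑ j ∈ Finset.range k, c ^ (k - 1 - j) * φ ((f ^ j) (g u)) := by
        simp [LinearMap.sum_apply, _root_.smul_pow]

variable {ι : Type*} [DecidableEq ι] {s : Finset ι} {v : ι → K} {z : ι → Module.Dual K E}

theorem Module.Dual.sum_nodalWeight_smul_comp_aeval_nodal (hvs : Set.InjOn v s)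
    (hs : s.Nonempty) (hzf : ∀ i ∈ s, z i ∘ₗ (f - v i • 1) = φ) :
    (∑ i ∈ s, nodalWeight s v i • z i) ∘ₗ aeval f (nodal s v) = φ := by
  have hnodal : ∀ i ∈ s, z i ∘ₗ aeval f (nodal s v) = φ ∘ₗ aeval f (nodal (s.erase i) v) := by
    intro i hi
    have hX : aeval f (X - C (v i)) = f - v i • 1 := by
      simp [Algebra.algebraMap_eq_smul_one]
    rw [nodal_eq_mul_nodal_erase hi, map_mul, hX, Module.End.mul_eq_comp, ← LinearMap.comp_assoc,
      hzf i hi]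
  have hbasis : ∑ i ∈ s, C (nodalWeight s v i) * nodal (s.erase i) v = 1 := by
    rw [← sum_basis hvs hs]
    refine Finset.sum_congr rfl fun i hi => ?_
    rw [basis_eq_prod_sub_inv_mul_nodal_div hi, nodal_erase_eq_nodal_div hi]
  ext x
  calc ((∑ i ∈ s, nodalWeight s v i • z i) ∘ₗ aeval f (nodal s v)) x
      = ∑ i ∈ s, nodalWeight s v i * φ (aeval f (nodal (s.erase i) v) x) := by
        simp only [LinearMap.comp_apply, LinearMap.sum_apply, LinearMap.smul_apply, smul_eq_mul]
        refine Finset.sum_congr rfl fun i hi => ?_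
        rw [← LinearMap.comp_apply (z i), hnodal i hi, LinearMap.comp_apply]
    _ = φ (aeval f (∑ i ∈ s, C (nodalWeight s v i) * nodal (s.erase i) v) x) := by
        simp [map_sum, LinearMap.sum_apply, Module.End.mul_apply]
    _ = φ x := by rw [hbasis, map_one, Module.End.one_apply]

theorem Module.Dual.apply_eq_zero_of_forall_comp_sub_smul_eq {R : Submodule K E}
    (hRf : R ≤ R.comap f)
    (hRg : R ≤ ⨆ k ∈ Finset.range s.card, (LinearMap.range g).map (f ^ k))
    (hvs : Set.InjOn v s) (hs : s.Nonempty) (hzf : ∀ i ∈ s, z i ∘ₗ (f - v i • 1) = φ)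
    (hzg : ∀ i ∈ s, z i ∘ₗ g = 0) {x : E} (hx : x ∈ R) : φ x = 0 := by
  set w := ∑ i ∈ s, nodalWeight s v i • z i
  have hw : ∀ k < s.card, ∀ u, w ((f ^ k) (g u)) = 0 := by
    intro k hk u
    simp only [w, LinearMap.sum_apply, LinearMap.smul_apply, smul_eq_mul]
    rw [Finset.sum_congr rfl fun i hi => by rw [apply_pow_apply_eq_sum (hzf i hi) (hzg i hi)]]
    simp_rw [Finset.mul_sum, ← mul_assoc]
    rw [Finset.sum_comm]
    refine Finset.sum_eq_zero fun j hj => ?_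
    rw [← Finset.sum_mul, sum_nodalWeight_mul_pow_eq_zero hvs, zero_mul]
    have := Finset.mem_range.mp hj
    omega
  have hwR : R ≤ LinearMap.ker w := hRg.trans <| iSup₂_le fun k hk => by
    rintro _ ⟨_, ⟨u, rfl⟩, rfl⟩
    exact hw k (Finset.mem_range.mp hk) u
  rw [← sum_nodalWeight_smul_comp_aeval_nodal hvs hs hzf]
  exact hwR (aeval_apply_smul_mem_of_le_comap hx _ f hRf)

end LinearMap

section Matrix

variable {n m : ℕ} (A : Matrix (Fin n) (Fin n) ℂ) (B : Matrix (Fin n) (Fin m) ℂ)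

theorem Matrix.mulVecLin_sub_smul_one (c : ℂ) : (A - c • 1).mulVecLin = A.mulVecLin - c • 1 := by
  rw [← Matrix.toLin'_apply', map_sub, map_smul, Matrix.toLin'_one, Matrix.toLin'_apply']
  rfl

theorem pencilSub_eq_map_fst_ker (c : ℂ) :
    pencilSub A B c = (LinearMap.ker ((A.mulVecLin - c • 1).coprod B.mulVecLin)).map
      (LinearMap.fst ℂ (Fin n → ℂ) (Fin m → ℂ)) := by
  rw [pencilSub, Matrix.mulVecLin_sub_smul_one]

theorem range_mulVecLin_le_reachSub : LinearMap.range B.mulVecLin ≤ reachSub A B :=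
  le_sInf fun _ hW => hW.1

theorem reachSub_le_comap_mulVecLin : reachSub A B ≤ (reachSub A B).comap A.mulVecLin :=
  Submodule.map_le_iff_le_comap.mp <|
    le_sInf fun _ hW => (Submodule.map_mono (sInf_le hW)).trans hW.2

end Matrix

theorem sum_pencil_eq_reachable_general (n m : ℕ)
    (A : Matrix (Fin n) (Fin n) ℂ) (B : Matrix (Fin n) (Fin m) ℂ)
    (h : ℕ) (hh : 1 ≤ h) (lam : Fin h → ℂ)
    (hdist : Function.Injective lam)
    (hctrl : ∀ i, ¬ IsUncontrollableEig A B (lam i))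
    (hkry : krylov A B h = reachSub A B) :
    (⨆ i, pencilSub A B (lam i)) = reachSub A B := by
  have hsurj : ∀ i, Function.Surjective ((A.mulVecLin - lam i • 1).coprod B.mulVecLin) := by
    intro i
    simpa [IsUncontrollableEig, Matrix.mulVecLin_sub_smul_one] using hctrl i
  refine le_antisymm (iSup_le fun i => ?_) fun x hx => ?_
  · rw [pencilSub_eq_map_fst_ker]
    exact map_fst_ker_coprod_le (le_comap_sub_smul_one (reachSub_le_comap_mulVecLin A B) _)
      (range_mulVecLin_le_reachSub A B) (hsurj i)
  · rw [← Subspace.forall_mem_dualAnnihilator_apply_eq_zero_iff]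
    intro φ hφ
    choose z hzf hzg using fun i => exists_dual_comp_eq_of_coprod_surjective (hsurj i)
      fun y hy => (Submodule.mem_dualAnnihilator φ).mp hφ y
        (le_iSup (fun i => pencilSub A B (lam i)) i (by rwa [pencilSub_eq_map_fst_ker]))
    refine Module.Dual.apply_eq_zero_of_forall_comp_sub_smul_eq (s := Finset.univ)
      (reachSub_le_comap_mulVecLin A B) ?_ hdist.injOn ⟨⟨0, hh⟩, Finset.mem_univ _⟩
      (fun i _ => hzf i) (fun i _ => hzg i) hx
    rw [Finset.card_univ, Fintype.card_fin, ← hkry]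
    rfl

theorem sum_pencil_eq_reachable (n m : ℕ) (hn : 0 < n) (hm : 0 < m)
    (A : Matrix (Fin n) (Fin n) ℂ) (B : Matrix (Fin n) (Fin m) ℂ)
    (h : ℕ) (hh : 1 ≤ h) (lam : Fin h → ℂ)
    (hdist : Function.Injective lam)
    (hctrl : ∀ i, ¬ IsUncontrollableEig A B (lam i))
    (hkry : krylov A B h = reachSub A B) :
    (⨆ i, pencilSub A B (lam i)) = reachSub A B :=
  sum_pencil_eq_reachable_general n m A B h hh lam hdist hctrl hkry
end

section
/- Let h ≥ 1 and let λ_1, …, λ_h be distinct complex numbers, none of which is an invariant zero of (A,B,C,D). Let 𝔗 be the set of output-nulling subspaces 𝒱 for which there exists a friend F of 𝒱 such that the restriction of A+BF to 𝒱 is diagonalizable and its set of eigenvalues is exactly {λ_1, …, λ_h}. If 𝒱_1 ∈ 𝔗 and 𝒱_2 ∈ 𝔗, then there exists 𝒱_3 ∈ 𝔗 with 𝒱_1 + 𝒱_2 ⊆ 𝒱_3. -/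
open Matrix Submodule

/-- The Rosenbrock matrix `[[A - λI, B], [C, D]]`. -/
noncomputable def rosenbrock {n m p : ℕ} (A : Matrix (Fin n) (Fin n) ℂ)
    (B : Matrix (Fin n) (Fin m) ℂ) (C : Matrix (Fin p) (Fin n) ℂ)
    (D : Matrix (Fin p) (Fin m) ℂ) (lam : ℂ) :
    Matrix (Fin n ⊕ Fin p) (Fin n ⊕ Fin m) ℂ :=
  Matrix.fromBlocks (A - lam • 1) B C D

/-- `λ` is an invariant zero of `(A,B,C,D)` if the rank of the Rosenbrock matrix at `λ`
is strictly smaller than its normal rank (the max over `μ` of the rank at `μ`). -/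
noncomputable def IsInvariantZero {n m p : ℕ} (A : Matrix (Fin n) (Fin n) ℂ)
    (B : Matrix (Fin n) (Fin m) ℂ) (C : Matrix (Fin p) (Fin n) ℂ)
    (D : Matrix (Fin p) (Fin m) ℂ) (lam : ℂ) : Prop :=
  (rosenbrock A B C D lam).rank < ⨆ μ : ℂ, (rosenbrock A B C D μ).rank

/-- The Rosenbrock pencil subspace `W(λ) = {x | ∃ u, (A - λI)x + Bu = 0 ∧ Cx + Du = 0}`. -/
noncomputable def rosSub {n m p : ℕ} (A : Matrix (Fin n) (Fin n) ℂ)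
    (B : Matrix (Fin n) (Fin m) ℂ) (C : Matrix (Fin p) (Fin n) ℂ)
    (D : Matrix (Fin p) (Fin m) ℂ) (lam : ℂ) : Submodule ℂ (Fin n → ℂ) :=
  Submodule.map (LinearMap.fst ℂ (Fin n → ℂ) (Fin m → ℂ))
    (LinearMap.ker ((((A - lam • 1).mulVecLin).coprod B.mulVecLin).prod
      ((C.mulVecLin).coprod D.mulVecLin)))

/-- A subspace `𝒱` is output-nulling if it has a friend `F`, i.e.
`(A + BF) 𝒱 ⊆ 𝒱` and `𝒱 ⊆ ker (C + DF)`. -/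
def IsOutputNulling {n m p : ℕ} (A : Matrix (Fin n) (Fin n) ℂ)
    (B : Matrix (Fin n) (Fin m) ℂ) (C : Matrix (Fin p) (Fin n) ℂ)
    (D : Matrix (Fin p) (Fin m) ℂ) (V : Submodule ℂ (Fin n → ℂ)) : Prop :=
  ∃ F : Matrix (Fin m) (Fin n) ℂ,
    (∀ x ∈ V, (A + B * F).mulVecLin x ∈ V) ∧ V ≤ LinearMap.ker (C + D * F).mulVecLin

/-- The largest output-nulling subspace `𝒱*`. -/
noncomputable def vStar {n m p : ℕ} (A : Matrix (Fin n) (Fin n) ℂ)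
    (B : Matrix (Fin n) (Fin m) ℂ) (C : Matrix (Fin p) (Fin n) ℂ)
    (D : Matrix (Fin p) (Fin m) ℂ) : Submodule ℂ (Fin n → ℂ) :=
  sSup {V : Submodule ℂ (Fin n → ℂ) | IsOutputNulling A B C D V}

/-- The input-containing sequence: `𝒮_0 = 0`,
`𝒮_{j+1} = {Ax + Bu : x ∈ 𝒮_j, Cx + Du = 0}`. -/
noncomputable def sSeq {n m p : ℕ} (A : Matrix (Fin n) (Fin n) ℂ)
    (B : Matrix (Fin n) (Fin m) ℂ) (C : Matrix (Fin p) (Fin n) ℂ)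
    (D : Matrix (Fin p) (Fin m) ℂ) : ℕ → Submodule ℂ (Fin n → ℂ)
  | 0 => ⊥
  | (j + 1) => Submodule.map ((A.mulVecLin).coprod B.mulVecLin)
      (((sSeq A B C D j).prod ⊤) ⊓ LinearMap.ker ((C.mulVecLin).coprod D.mulVecLin))

/-- Diagonalizable endomorphism: the eigenspaces span the whole space. -/
def IsDiagonalizable {M : Type*} [AddCommGroup M] [Module ℂ M]
    (f : M →ₗ[ℂ] M) : Prop :=
  (⨆ μ : ℂ, Module.End.eigenspace f μ) = ⊤

/-! In fact `V₁ ⊔ V₂` itself lies in 𝔗. For a fixed friend `F`, the condition on `A + BF`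
restricted to `V` says that `V` is spanned by the eigenvectors of `A + BF` it contains, with
eigenvalues in `{λᵢ}` and each `λᵢ` occurring. Complete `V₁` to `V₁ ⊔ V₂` by a subspace `W`
spanned by such eigenvectors of `A + BF₂` in `V₂` with `V₁ ∩ W = 0`. As the sum `V₁ ⊕ W` is
direct, one feedback `F` can agree with `F₁` on `V₁` and with `F₂` on `W`; then `V₁ ⊕ W` is
annihilated by `C + DF` and spanned by eigenvectors of `A + BF`, which puts it in 𝔗. -/

open Module.End

section Eigenspaces

variable {R M : Type*} [CommRing R] [AddCommGroup M] [Module R M]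
  {f g : Module.End R M} {V W : Submodule R M} {Λ : Set R}

theorem Submodule.inf_eigenspace_congr (h : Set.EqOn f g V) (μ : R) :
    V ⊓ f.eigenspace μ = V ⊓ g.eigenspace μ := by
  ext x
  simp only [mem_inf, mem_eigenspace_iff, and_congr_right_iff]
  intro hx
  rw [h hx]

theorem Submodule.mapsTo_of_le_iSup_inf_eigenspace (hV : V ≤ ⨆ μ ∈ Λ, V ⊓ f.eigenspace μ) :
    ∀ x ∈ V, f x ∈ V := by
  suffices (⨆ μ ∈ Λ, V ⊓ f.eigenspace μ) ≤ V.comap f from fun x hx => this (hV hx)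
  refine iSup₂_le fun μ _ x hx => ?_
  rw [mem_comap, mem_eigenspace_iff.1 hx.2]
  exact V.smul_mem μ hx.1

theorem Submodule.span_le_iSup_inf_eigenspace {t : Set M} (ht : t ⊆ ⋃ μ ∈ Λ, f.eigenspace μ) :
    span R t ≤ ⨆ μ ∈ Λ, span R t ⊓ f.eigenspace μ := by
  refine span_le.2 fun x hx => ?_
  obtain ⟨μ, hμ, hxμ⟩ := Set.mem_iUnion₂.1 (ht hx)
  exact le_iSup₂ (f := fun μ _ => span R t ⊓ f.eigenspace μ) μ hμ ⟨subset_span hx, hxμ⟩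

theorem Submodule.sup_le_iSup_inf_eigenspace {h : Module.End R M}
    (hV : V ≤ ⨆ μ ∈ Λ, V ⊓ f.eigenspace μ) (hW : W ≤ ⨆ μ ∈ Λ, W ⊓ g.eigenspace μ)
    (hfh : Set.EqOn f h V) (hgh : Set.EqOn g h W) :
    V ⊔ W ≤ ⨆ μ ∈ Λ, (V ⊔ W) ⊓ h.eigenspace μ := by
  refine sup_le (hV.trans ?_) (hW.trans ?_) <;> refine iSup₂_mono fun μ _ => ?_
  · rw [inf_eigenspace_congr hfh]
    exact inf_le_inf_right _ le_sup_left
  · rw [inf_eigenspace_congr hgh]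
    exact inf_le_inf_right _ le_sup_right

theorem Module.End.hasEigenvalue_restrict_iff (hV : ∀ x ∈ V, f x ∈ V) {μ : R} :
    HasEigenvalue (f.restrict hV) μ ↔ V ⊓ f.eigenspace μ ≠ ⊥ := by
  rw [hasEigenvalue_iff, Submodule.inf_genEigenspace f V hV, Ne, Ne,
    (map_injective_of_injective V.injective_subtype).eq_iff' (map_bot _)]

end Eigenspaces

theorem LinearMap.exists_eqOn_of_disjoint {K E F : Type*} [DivisionRing K] [AddCommGroup E]
    [Module K E] [AddCommGroup F] [Module K F] {V W : Submodule K E} (hVW : Disjoint V W)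
    (f g : E →ₗ[K] F) : ∃ h : E →ₗ[K] F, Set.EqOn h f V ∧ Set.EqOn h g W := by
  have hfg : ∀ (x : (f.toPMap V).domain) (y : (g.toPMap W).domain),
      (x : E) = y → f.toPMap V x = g.toPMap W y := by
    intro x y hxy
    have hx : (x : E) = 0 := hVW.le_bot ⟨x.2, hxy ▸ y.2⟩
    change f x = g y
    rw [← hxy, hx, map_zero, map_zero]
  set φ := (f.toPMap V).sup (g.toPMap W) hfg
  obtain ⟨h, hφ⟩ := φ.toFun.exists_extend
  refine ⟨h, fun x hx => ?_, fun x hx => ?_⟩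
  · calc h x = φ ⟨x, mem_sup_left hx⟩ := LinearMap.congr_fun hφ ⟨x, _⟩
      _ = f x := (((f.toPMap V).left_le_sup _ hfg).2 (x := ⟨x, hx⟩) rfl).symm
  · calc h x = φ ⟨x, mem_sup_right hx⟩ := LinearMap.congr_fun hφ ⟨x, _⟩
      _ = g x := (((f.toPMap V).right_le_sup _ hfg).2 (x := ⟨x, hx⟩) rfl).symm

theorem Submodule.exists_subset_disjoint_sup_span_eq {K E : Type*} [DivisionRing K]
    [AddCommGroup E] [Module K E] (V : Submodule K E) (S : Set E) :
    ∃ t ⊆ S, Disjoint V (span K t) ∧ V ⊔ span K t = V ⊔ span K S := by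
  obtain ⟨b₀, hb₀V, hb₀span, hb₀⟩ := exists_linearIndependent K (V : Set E)
  obtain ⟨b, hb, hb₀b, hbspan, hbind⟩ :=
    exists_linearIndepOn_id_extension hb₀ (Set.subset_union_left (t := S))
  have hspan : span K b = V ⊔ span K (b \ b₀) := by
    conv_lhs => rw [← Set.union_sdiff_cancel hb₀b]
    rw [span_union, hb₀span, span_eq]
  refine ⟨b \ b₀, fun x hx => (hb hx.1).resolve_left hx.2, ?_, ?_⟩
  · have := ((linearIndepOn_id_union_iff Set.disjoint_sdiff_right).1
      ((Set.union_sdiff_cancel hb₀b).symm ▸ hbind)).2.2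
    rwa [hb₀span, span_eq] at this
  · calc V ⊔ span K (b \ b₀) = span K b := hspan.symm
      _ = span K (b₀ ∪ S) := le_antisymm (span_mono hb) (span_le.2 hbspan)
      _ = V ⊔ span K S := by rw [span_union, hb₀span, span_eq]

theorem Module.End.isDiagonalizable_and_eigenvalues_eq_iff {M : Type*} [AddCommGroup M]
    [Module ℂ M] (g : Module.End ℂ M) (Λ : Set ℂ) :
    IsDiagonalizable g ∧ {μ | HasEigenvalue g μ} = Λ ↔
      (⨆ μ ∈ Λ, g.eigenspace μ) = ⊤ ∧ ∀ μ ∈ Λ, HasEigenvalue g μ := by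
  constructor
  · rintro ⟨hdiag, rfl⟩
    refine ⟨eq_top_iff.2 (hdiag.ge.trans (iSup_le fun μ => ?_)), fun μ hμ => hμ⟩
    by_cases hμ : HasEigenvalue g μ
    · exact le_iSup₂_of_le μ hμ le_rfl
    · rw [hasEigenvalue_iff, not_not] at hμ
      simp [hμ]
  · rintro ⟨hspan, hΛ⟩
    refine ⟨eq_top_iff.2 (hspan.ge.trans (iSup₂_le fun μ _ => le_iSup _ μ)), ?_⟩
    refine Set.Subset.antisymm (fun μ hμ => ?_) hΛ
    by_contra hμΛ
    have hle : (⨆ μ ∈ Λ, g.eigenspace μ) ≤ ⨆ ν ≠ μ, g.eigenspace ν :=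
      iSup₂_mono' fun ν hν => ⟨ν, ne_of_mem_of_not_mem hν hμΛ, le_rfl⟩
    have hdisj := g.eigenspaces_iSupIndep μ
    rw [hspan, top_le_iff] at hle
    rw [hle, disjoint_top] at hdisj
    exact hμ hdisj

theorem Module.End.isDiagonalizable_restrict_and_eigenvalues_eq_iff {M : Type*}
    [AddCommGroup M] [Module ℂ M] {f : Module.End ℂ M} {V : Submodule ℂ M}
    (hV : ∀ x ∈ V, f x ∈ V) (Λ : Set ℂ) :
    IsDiagonalizable (f.restrict hV) ∧ {μ | HasEigenvalue (f.restrict hV) μ} = Λ ↔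
      V ≤ ⨆ μ ∈ Λ, V ⊓ f.eigenspace μ ∧ ∀ μ ∈ Λ, V ⊓ f.eigenspace μ ≠ ⊥ := by
  rw [isDiagonalizable_and_eigenvalues_eq_iff]
  simp only [hasEigenvalue_restrict_iff]
  refine and_congr_left' ?_
  simp_rw [Submodule.inf_genEigenspace f V hV, ← Submodule.map_iSup]
  rw [eq_top_iff, ← map_le_map_iff_of_injective V.injective_subtype, map_subtype_top]

theorem Matrix.add_mul_mulVec_congr {ι κ ν R : Type*} [Fintype κ] [Fintype ν] [CommRing R]
    (P : Matrix ι ν R) (Q : Matrix ι κ R) {F F' : Matrix κ ν R} {x : ν → R}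
    (h : F *ᵥ x = F' *ᵥ x) : (P + Q * F) *ᵥ x = (P + Q * F') *ᵥ x := by
  rw [add_mulVec, add_mulVec, ← mulVec_mulVec, ← mulVec_mulVec, h]

theorem Matrix.exists_mulVec_eqOn_of_disjoint {ι κ K : Type*} [Field K] [Fintype κ]
    [DecidableEq κ] {V W : Submodule K (κ → K)} (hVW : Disjoint V W) (F₁ F₂ : Matrix ι κ K) :
    ∃ F : Matrix ι κ K, Set.EqOn F.mulVecLin F₁.mulVecLin V ∧
      Set.EqOn F.mulVecLin F₂.mulVecLin W := by
  obtain ⟨g, hg₁, hg₂⟩ := LinearMap.exists_eqOn_of_disjoint hVW F₁.mulVecLin F₂.mulVecLin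
  refine ⟨LinearMap.toMatrix' g, ?_, ?_⟩ <;> rwa [← toLin'_apply', toLin'_toMatrix']

def HasDiagonalizableFriend {n m p : ℕ} (A : Matrix (Fin n) (Fin n) ℂ)
    (B : Matrix (Fin n) (Fin m) ℂ) (C : Matrix (Fin p) (Fin n) ℂ)
    (D : Matrix (Fin p) (Fin m) ℂ) (Λ : Set ℂ) (V : Submodule ℂ (Fin n → ℂ)) : Prop :=
  ∃ (F : Matrix (Fin m) (Fin n) ℂ) (hinv : ∀ x ∈ V, (A + B * F).mulVecLin x ∈ V),
    V ≤ LinearMap.ker (C + D * F).mulVecLin ∧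
    IsDiagonalizable ((A + B * F).mulVecLin.restrict hinv) ∧
    {μ : ℂ | HasEigenvalue ((A + B * F).mulVecLin.restrict hinv) μ} = Λ

section HasDiagonalizableFriend

variable {n m p : ℕ} {A : Matrix (Fin n) (Fin n) ℂ} {B : Matrix (Fin n) (Fin m) ℂ}
  {C : Matrix (Fin p) (Fin n) ℂ} {D : Matrix (Fin p) (Fin m) ℂ} {Λ : Set ℂ}
  {V V₁ V₂ : Submodule ℂ (Fin n → ℂ)}

theorem hasDiagonalizableFriend_iff :
    HasDiagonalizableFriend A B C D Λ V ↔ ∃ F : Matrix (Fin m) (Fin n) ℂ,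
      V ≤ LinearMap.ker (C + D * F).mulVecLin ∧
      V ≤ ⨆ μ ∈ Λ, V ⊓ eigenspace (A + B * F).mulVecLin μ ∧
      ∀ μ ∈ Λ, V ⊓ eigenspace (A + B * F).mulVecLin μ ≠ ⊥ := by
  constructor
  · rintro ⟨F, hinv, hker, hdiag⟩
    exact ⟨F, hker, (isDiagonalizable_restrict_and_eigenvalues_eq_iff hinv Λ).1 hdiag⟩
  · rintro ⟨F, hker, hspan, hne⟩
    have hinv := mapsTo_of_le_iSup_inf_eigenspace hspan
    exact ⟨F, hinv, hker, (isDiagonalizable_restrict_and_eigenvalues_eq_iff hinv Λ).2 ⟨hspan, hne⟩⟩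

theorem HasDiagonalizableFriend.sup (h₁ : HasDiagonalizableFriend A B C D Λ V₁)
    (h₂ : HasDiagonalizableFriend A B C D Λ V₂) :
    HasDiagonalizableFriend A B C D Λ (V₁ ⊔ V₂) := by
  obtain ⟨F₁, hker₁, hspan₁, hne₁⟩ := hasDiagonalizableFriend_iff.1 h₁
  obtain ⟨F₂, hker₂, hspan₂, -⟩ := hasDiagonalizableFriend_iff.1 h₂
  set f₂ := (A + B * F₂).mulVecLin
  set S := ⋃ μ ∈ Λ, ((V₂ ⊓ eigenspace f₂ μ : Submodule ℂ (Fin n → ℂ)) : Set (Fin n → ℂ))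
  have hS : span ℂ S = V₂ := by
    refine le_antisymm (span_le.2 (Set.iUnion₂_subset fun μ _ => inf_le_left)) ?_
    exact hspan₂.trans (iSup₂_le fun μ hμ x hx => subset_span (Set.mem_iUnion₂.2 ⟨μ, hμ, hx⟩))
  obtain ⟨t, htS, hdisj, hsup⟩ := exists_subset_disjoint_sup_span_eq V₁ S
  obtain ⟨F, hF₁, hF₂⟩ := exists_mulVec_eqOn_of_disjoint hdisj F₁ F₂
  have htV₂ : span ℂ t ≤ V₂ := hS ▸ span_mono htS
  have hfeq₁ : Set.EqOn (A + B * F₁).mulVecLin (A + B * F).mulVecLin V₁ :=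
    fun x hx => (add_mul_mulVec_congr A B (hF₁ hx)).symm
  have hfeq₂ : Set.EqOn f₂ (A + B * F).mulVecLin (span ℂ t) :=
    fun x hx => (add_mul_mulVec_congr A B (hF₂ hx)).symm
  rw [← hS, ← hsup]
  refine hasDiagonalizableFriend_iff.2 ⟨F, sup_le ?_ ?_, ?_, fun μ hμ => ?_⟩
  · intro x hx
    rw [LinearMap.mem_ker, mulVecLin_apply, add_mul_mulVec_congr C D (hF₁ hx)]
    exact hker₁ hx
  · intro x hx
    rw [LinearMap.mem_ker, mulVecLin_apply, add_mul_mulVec_congr C D (hF₂ hx)]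
    exact hker₂ (htV₂ hx)
  · refine sup_le_iSup_inf_eigenspace hspan₁ (span_le_iSup_inf_eigenspace ?_) hfeq₁ hfeq₂
    exact htS.trans (Set.iUnion₂_mono fun μ _ => SetLike.coe_subset_coe.2 inf_le_right)
  · refine ne_bot_of_le_ne_bot (hne₁ μ hμ) ?_
    rw [inf_eigenspace_congr hfeq₁]
    exact inf_le_inf_right _ le_sup_left

end HasDiagonalizableFriend

theorem sum_of_diagonalizable_output_nulling_general (n m p : ℕ)
    (A : Matrix (Fin n) (Fin n) ℂ) (B : Matrix (Fin n) (Fin m) ℂ)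
    (C : Matrix (Fin p) (Fin n) ℂ) (D : Matrix (Fin p) (Fin m) ℂ)
    (h : ℕ) (lam : Fin h → ℂ)
    (T : Set (Submodule ℂ (Fin n → ℂ)))
    (hT : T = {V : Submodule ℂ (Fin n → ℂ) |
      ∃ (F : Matrix (Fin m) (Fin n) ℂ)
        (hinv : ∀ x ∈ V, (A + B * F).mulVecLin x ∈ V),
        V ≤ LinearMap.ker (C + D * F).mulVecLin ∧
        IsDiagonalizable ((A + B * F).mulVecLin.restrict hinv) ∧
        {μ : ℂ | Module.End.HasEigenvalue ((A + B * F).mulVecLin.restrict hinv) μ} =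
          Set.range lam})
    (V₁ V₂ : Submodule ℂ (Fin n → ℂ)) (hV₁ : V₁ ∈ T) (hV₂ : V₂ ∈ T) :
    ∃ V₃ ∈ T, V₁ ⊔ V₂ ≤ V₃ := by
  subst hT
  exact ⟨V₁ ⊔ V₂, HasDiagonalizableFriend.sup hV₁ hV₂, le_rfl⟩

theorem sum_of_diagonalizable_output_nulling (n m p : ℕ)
    (hn : 0 < n) (hm : 0 < m) (hp : 0 < p)
    (A : Matrix (Fin n) (Fin n) ℂ) (B : Matrix (Fin n) (Fin m) ℂ)
    (C : Matrix (Fin p) (Fin n) ℂ) (D : Matrix (Fin p) (Fin m) ℂ)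
    (h : ℕ) (hh : 1 ≤ h) (lam : Fin h → ℂ)
    (hdist : Function.Injective lam)
    (hz : ∀ i, ¬ IsInvariantZero A B C D (lam i))
    (T : Set (Submodule ℂ (Fin n → ℂ)))
    (hT : T = {V : Submodule ℂ (Fin n → ℂ) |
      ∃ (F : Matrix (Fin m) (Fin n) ℂ)
        (hinv : ∀ x ∈ V, (A + B * F).mulVecLin x ∈ V),
        V ≤ LinearMap.ker (C + D * F).mulVecLin ∧
        IsDiagonalizable ((A + B * F).mulVecLin.restrict hinv) ∧
        {μ : ℂ | Module.End.HasEigenvalue ((A + B * F).mulVecLin.restrict hinv) μ} =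
          Set.range lam})
    (V₁ V₂ : Submodule ℂ (Fin n → ℂ)) (hV₁ : V₁ ∈ T) (hV₂ : V₂ ∈ T) :
    ∃ V₃ ∈ T, V₁ ⊔ V₂ ≤ V₃ :=
  sum_of_diagonalizable_output_nulling_general n m p A B C D h lam T hT V₁ V₂ hV₁ hV₂
end

section
/- Let h ≥ 1 and let λ_1, …, λ_h be distinct complex numbers, none of which is an invariant zero of (A,B,C,D). Then 𝒦_h := W(λ_1) + ⋯ + W(λ_h) is an output-nulling subspace and admits a friend F such that the restriction of A+BF to 𝒦_h is diagonalizable with every eigenvalue of this restriction belonging to {λ_1, …, λ_h}. Consequently, 𝒦_h is the greatest element (with respect to inclusion) of the set of output-nulling subspaces 𝒱 admitting a friend F such that the restriction of A+BF to 𝒱 is diagonalizable with all its eigenvalues in {λ_1, …, λ_h}. -/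
open Matrix Submodule

/-!
Choose a basis of `⨆ i, W(λ i)` made of vectors of the individual `W(λ i)`, and let the friend
`F` send each basis vector `x ∈ W(λ i)` to an input `u` with `(A - λ i) x + B u = 0` and
`C x + D u = 0`. Then every basis vector is an eigenvector of `A + BF` for `λ i` killed by
`C + DF`. Conversely, if `F` is a friend of `V`, an eigenvector `x ∈ V` of `A + BF` for `λ i`
lies in `W(λ i)` with input `u = F x`, and diagonalizability says that `V` is spanned by such
eigenvectors.
-/

open Module.End

theorem LinearIndependent.exists_linearMap_apply_eq {K V V' ι : Type*} [Field K]
    [AddCommGroup V] [Module K V] [AddCommGroup V'] [Module K V'] {v : ι → V}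
    (hv : LinearIndependent K v) (w : ι → V') : ∃ f : V →ₗ[K] V', ∀ i, f (v i) = w i := by
  obtain ⟨f, hf⟩ := ((Module.Basis.span hv).constr K w).exists_extend
  refine ⟨f, fun i => ?_⟩
  have hfi := congr($hf (Module.Basis.span hv i))
  rwa [Module.Basis.constr_basis, LinearMap.comp_apply, Submodule.subtype_apply,
    Module.Basis.span_apply] at hfi

section Eigenspaces

variable {R M ι : Type*} [CommRing R] [AddCommGroup M] [Module R M]
  {f : Module.End R M} {V : Submodule R M}

theorem mapsTo_of_le_iSup_eigenspace_inf {lam : ι → R}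
    (hV : V ≤ ⨆ i, eigenspace f (lam i) ⊓ V) : ∀ x ∈ V, f x ∈ V := by
  suffices V ≤ V.comap f from this
  refine hV.trans (iSup_le fun i x hx => ?_)
  rw [Submodule.mem_comap, mem_eigenspace_iff.mp hx.1]
  exact V.smul_mem _ hx.2

theorem iSup_eigenspace_restrict_eq_top (hfV : ∀ x ∈ V, f x ∈ V) {lam : ι → R}
    (hV : V ≤ ⨆ i, eigenspace f (lam i) ⊓ V) :
    ⨆ i, eigenspace (f.restrict hfV) (lam i) = ⊤ := by
  refine eq_top_iff.mpr ((Submodule.map_le_map_iff_of_injective V.injective_subtype _ _).mp ?_)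
  rw [Submodule.map_subtype_top, Submodule.map_iSup]
  refine hV.trans (iSup_mono fun i => ?_)
  rw [inf_comm]
  exact (Submodule.inf_genEigenspace f V hfV).le

theorem mem_range_of_iSup_eigenspace_eq_top [IsDomain R] [Module.IsTorsionFree R M] {lam : ι → R}
    (h : ⨆ i, eigenspace f (lam i) = ⊤) {μ : R} (hμ : f.HasEigenvalue μ) : μ ∈ Set.range lam := by
  by_contra hμlam
  refine hμ ((eigenspaces_iSupIndep f μ).eq_bot_of_le (le_top.trans (h.ge.trans ?_)))
  exact iSup_le fun i => le_iSup₂_of_le (lam i) (fun hi => hμlam ⟨i, hi⟩) le_rfl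

theorem le_iSup_eigenspace_inf_of_iSup_eigenspace_restrict_eq_top (hfV : ∀ x ∈ V, f x ∈ V)
    (h : ⨆ μ, eigenspace (f.restrict hfV) μ = ⊤) :
    V ≤ ⨆ μ, ⨆ _ : HasEigenvalue (f.restrict hfV) μ, eigenspace f μ ⊓ V := by
  intro x hx
  suffices ⨆ μ, eigenspace (f.restrict hfV) μ ≤ Submodule.comap V.subtype
      (⨆ μ, ⨆ _ : HasEigenvalue (f.restrict hfV) μ, eigenspace f μ ⊓ V) from
    this (h ▸ trivial : (⟨x, hx⟩ : V) ∈ _)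
  refine iSup_le fun μ v hv => ?_
  rcases eq_or_ne v 0 with rfl | hv0
  · exact Submodule.zero_mem _
  refine Submodule.mem_iSup_of_mem μ (Submodule.mem_iSup_of_mem
    (hasEigenvalue_of_hasEigenvector ⟨hv, hv0⟩) ⟨?_, v.2⟩)
  exact eigenspace_restrict_le_eigenspace f hfV μ ⟨v, hv, rfl⟩

end Eigenspaces

theorem isDiagonalizable_of_iSup_eigenspace_eq_top {M ι : Type*} [AddCommGroup M] [Module ℂ M]
    {f : Module.End ℂ M} {lam : ι → ℂ} (h : ⨆ i, eigenspace f (lam i) = ⊤) : IsDiagonalizable f :=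
  eq_top_iff.mpr (h.ge.trans (iSup_le fun i => le_iSup (eigenspace f ·) (lam i)))

section Rosenbrock

variable {n m p : ℕ} {A : Matrix (Fin n) (Fin n) ℂ} {B : Matrix (Fin n) (Fin m) ℂ}
  {C : Matrix (Fin p) (Fin n) ℂ} {D : Matrix (Fin p) (Fin m) ℂ}

theorem mem_rosSub_iff {lam : ℂ} {x : Fin n → ℂ} :
    x ∈ rosSub A B C D lam ↔
      ∃ u : Fin m → ℂ, (A - lam • 1) *ᵥ x + B *ᵥ u = 0 ∧ C *ᵥ x + D *ᵥ u = 0 := by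
  simp only [rosSub, Submodule.mem_map, LinearMap.mem_ker, LinearMap.prod_apply, LinearMap.coprod_apply,
    mulVecLin_apply, LinearMap.fst_apply, Prod.exists, Function.prod, Prod.mk_eq_zero]
  constructor
  · rintro ⟨_, u, hu, rfl⟩
    exact ⟨u, hu⟩
  · rintro ⟨u, hu⟩
    exact ⟨x, u, hu, rfl⟩

theorem eigenspace_inf_ker_le_rosSub (F : Matrix (Fin m) (Fin n) ℂ) (lam : ℂ) :
    eigenspace (A + B * F).mulVecLin lam ⊓ LinearMap.ker (C + D * F).mulVecLin ≤
      rosSub A B C D lam := by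
  rintro x ⟨hx, hker⟩
  rw [SetLike.mem_coe, mem_eigenspace_iff, mulVecLin_apply, add_mulVec, ← mulVec_mulVec] at hx
  rw [SetLike.mem_coe, LinearMap.mem_ker, mulVecLin_apply, add_mulVec, ← mulVec_mulVec] at hker
  refine mem_rosSub_iff.mpr ⟨F *ᵥ x, ?_, hker⟩
  rw [sub_mulVec, smul_mulVec, one_mulVec, sub_add_eq_add_sub, hx, sub_self]

theorem mem_eigenspace_inf_ker_of_mulVec_eq (F : Matrix (Fin m) (Fin n) ℂ) {lam : ℂ}
    {x : Fin n → ℂ} {u : Fin m → ℂ} (hA : (A - lam • 1) *ᵥ x + B *ᵥ u = 0)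
    (hC : C *ᵥ x + D *ᵥ u = 0) (hF : F *ᵥ x = u) :
    x ∈ eigenspace (A + B * F).mulVecLin lam ⊓ LinearMap.ker (C + D * F).mulVecLin := by
  rw [sub_mulVec, smul_mulVec, one_mulVec, sub_add_eq_add_sub, sub_eq_zero] at hA
  refine ⟨?_, ?_⟩
  · rw [SetLike.mem_coe, mem_eigenspace_iff, mulVecLin_apply, add_mulVec, ← mulVec_mulVec, hF, hA]
  · rw [SetLike.mem_coe, LinearMap.mem_ker, mulVecLin_apply, add_mulVec, ← mulVec_mulVec, hF, hC]

theorem exists_iSup_rosSub_le_iSup_eigenspace_inf_ker {ι : Type*} (lam : ι → ℂ) :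
    ∃ F : Matrix (Fin m) (Fin n) ℂ, ⨆ i, rosSub A B C D (lam i) ≤
      ⨆ i, eigenspace (A + B * F).mulVecLin (lam i) ⊓ LinearMap.ker (C + D * F).mulVecLin := by
  obtain ⟨t, hts, hspan, hli⟩ :=
    exists_linearIndependent ℂ (⋃ i, (rosSub A B C D (lam i) : Set (Fin n → ℂ)))
  have hwitness : ∀ x : t, ∃ i, ∃ u : Fin m → ℂ,
      (A - lam i • 1) *ᵥ (x : Fin n → ℂ) + B *ᵥ u = 0 ∧ C *ᵥ (x : Fin n → ℂ) + D *ᵥ u = 0 := by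
    intro x
    obtain ⟨i, hi⟩ := Set.mem_iUnion.mp (hts x.2)
    exact ⟨i, mem_rosSub_iff.mp hi⟩
  choose idx u hu using hwitness
  obtain ⟨F, hF⟩ := hli.exists_linearMap_apply_eq u
  refine ⟨LinearMap.toMatrix' F, ?_⟩
  rw [Submodule.iSup_eq_span, ← hspan, Submodule.span_le]
  intro x hx
  refine Submodule.mem_iSup_of_mem (idx ⟨x, hx⟩) (mem_eigenspace_inf_ker_of_mulVec_eq _
    (hu ⟨x, hx⟩).1 (hu ⟨x, hx⟩).2 ?_)
  rw [LinearMap.toMatrix'_mulVec]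
  exact hF ⟨x, hx⟩

end Rosenbrock

theorem sum_rosSub_isGreatest_general (n m p : ℕ)
    (A : Matrix (Fin n) (Fin n) ℂ) (B : Matrix (Fin n) (Fin m) ℂ)
    (C : Matrix (Fin p) (Fin n) ℂ) (D : Matrix (Fin p) (Fin m) ℂ)
    (h : ℕ) (lam : Fin h → ℂ) :
    IsGreatest {V : Submodule ℂ (Fin n → ℂ) |
      ∃ (F : Matrix (Fin m) (Fin n) ℂ)
        (hinv : ∀ x ∈ V, (A + B * F).mulVecLin x ∈ V),
        V ≤ LinearMap.ker (C + D * F).mulVecLin ∧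
        IsDiagonalizable ((A + B * F).mulVecLin.restrict hinv) ∧
        (∀ μ : ℂ, Module.End.HasEigenvalue ((A + B * F).mulVecLin.restrict hinv) μ →
          μ ∈ Set.range lam)}
      (⨆ i, rosSub A B C D (lam i)) := by
  set K := ⨆ i, rosSub A B C D (lam i)
  have rosSub_le_K (i : Fin h) : rosSub A B C D (lam i) ≤ K := le_iSup (rosSub A B C D ∘ lam) i
  constructor
  · obtain ⟨F, hF⟩ := exists_iSup_rosSub_le_iSup_eigenspace_inf_ker (A := A) (B := B) (C := C)
      (D := D) lam
    have hK : K ≤ ⨆ i, eigenspace (A + B * F).mulVecLin (lam i) ⊓ K := hF.trans <| iSup_mono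
      fun i => le_inf inf_le_left ((eigenspace_inf_ker_le_rosSub F (lam i)).trans (rosSub_le_K i))
    have hinv := mapsTo_of_le_iSup_eigenspace_inf hK
    have htop := iSup_eigenspace_restrict_eq_top hinv hK
    exact ⟨F, hinv, hF.trans (iSup_le fun i => inf_le_right),
      isDiagonalizable_of_iSup_eigenspace_eq_top htop,
      fun μ => mem_range_of_iSup_eigenspace_eq_top htop⟩
  · rintro V ⟨F, hinv, hker, hdiag, heig⟩
    refine (le_iSup_eigenspace_inf_of_iSup_eigenspace_restrict_eq_top hinv hdiag).trans
      (iSup₂_le fun μ hμ => ?_)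
    obtain ⟨i, rfl⟩ := heig μ hμ
    calc eigenspace (A + B * F).mulVecLin (lam i) ⊓ V
        ≤ eigenspace (A + B * F).mulVecLin (lam i) ⊓ LinearMap.ker (C + D * F).mulVecLin :=
          inf_le_inf_left _ hker
      _ ≤ K := (eigenspace_inf_ker_le_rosSub F (lam i)).trans (rosSub_le_K i)

theorem sum_rosSub_isGreatest (n m p : ℕ)
    (hn : 0 < n) (hm : 0 < m) (hp : 0 < p)
    (A : Matrix (Fin n) (Fin n) ℂ) (B : Matrix (Fin n) (Fin m) ℂ)
    (C : Matrix (Fin p) (Fin n) ℂ) (D : Matrix (Fin p) (Fin m) ℂ)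
    (h : ℕ) (hh : 1 ≤ h) (lam : Fin h → ℂ)
    (hdist : Function.Injective lam)
    (hz : ∀ i, ¬ IsInvariantZero A B C D (lam i)) :
    IsGreatest {V : Submodule ℂ (Fin n → ℂ) |
      ∃ (F : Matrix (Fin m) (Fin n) ℂ)
        (hinv : ∀ x ∈ V, (A + B * F).mulVecLin x ∈ V),
        V ≤ LinearMap.ker (C + D * F).mulVecLin ∧
        IsDiagonalizable ((A + B * F).mulVecLin.restrict hinv) ∧
        (∀ μ : ℂ, Module.End.HasEigenvalue ((A + B * F).mulVecLin.restrict hinv) μ →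
          μ ∈ Set.range lam)}
      (⨆ i, rosSub A B C D (lam i)) :=
  sum_rosSub_isGreatest_general n m p A B C D h lam
end

section
/- Let Δ be an n×n diagonal complex matrix whose diagonal entries take exactly h distinct values, and let H be an n×m complex matrix. Then the smallest Δ-invariant subspace of ℂ^n containing range H equals range H + Δ(range H) + ⋯ + Δ^{h−1}(range H). -/
/-!
The smallest `Δ`-invariant subspace containing `S` is `⨆ k, Δᵏ S`. If `p` is monic of degree `h`
and `p(Δ) = 0`, then every power `Δᵏ` equals `r(Δ)` for the remainder `r = Xᵏ mod p`, of degree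
`< h`, so the powers `Δᵏ` with `k ≥ h` contribute nothing new. A diagonal matrix with `h` distinct
entries `c` is annihilated by `∏ (X - c)`, of degree `h`.
-/

open Matrix Submodule Polynomial

section InvariantHull

variable {R M : Type*} [Semiring R] [AddCommMonoid M] [Module R M]

theorem sInf_invariant_eq_iSup_map_pow (T : Module.End R M) (S : Submodule R M) :
    sInf {W : Submodule R M | S ≤ W ∧ W.map T ≤ W} = ⨆ k, S.map (T ^ k) := by
  refine le_antisymm (sInf_le ⟨?_, ?_⟩) (le_sInf fun W ⟨hSW, hTW⟩ => iSup_le fun k => ?_)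
  · have h0 := le_iSup (fun k => S.map (T ^ k)) 0
    rwa [pow_zero, Module.End.one_eq_id, Submodule.map_id] at h0
  · rw [Submodule.map_iSup]
    refine iSup_mono' fun k => ⟨k + 1, ?_⟩
    rw [← Submodule.map_comp, ← Module.End.mul_eq_comp, ← pow_succ']
  · induction k with
    | zero => simpa [Module.End.one_eq_id] using hSW
    | succ k ih =>
      rw [pow_succ', Module.End.mul_eq_comp, Submodule.map_comp]
      exact (map_mono ih).trans hTW

end InvariantHull

section Annihilated

variable {R M : Type*} [CommRing R] [AddCommGroup M] [Module R M]
  (T : Module.End R M) (S : Submodule R M)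

theorem map_aeval_le_iSup_map_pow {q : R[X]} {N : ℕ} (hq : q.natDegree < N) :
    S.map (aeval T q) ≤ ⨆ j ∈ Finset.range N, S.map (T ^ j) := by
  rintro _ ⟨x, hx, rfl⟩
  rw [aeval_eq_sum_range' hq, LinearMap.sum_apply]
  exact sum_mem fun j hj => smul_mem _ _ <|
    mem_iSup_of_mem j <| mem_iSup_of_mem hj <| mem_map_of_mem hx

theorem iSup_map_pow_eq_of_aeval_eq_zero {p : R[X]} (hp : p.Monic) (hTp : aeval T p = 0) :
    ⨆ k, S.map (T ^ k) = ⨆ k ∈ Finset.range p.natDegree, S.map (T ^ k) := by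
  refine le_antisymm (iSup_le fun k => ?_)
    (iSup₂_le fun k _ => le_iSup (fun k => S.map (T ^ k)) k)
  have hpow : T ^ k = aeval T (X ^ k %ₘ p) := by
    rw [aeval_modByMonic_eq_self_of_root hTp, aeval_X_pow]
  rw [hpow]
  by_cases hp1 : p = 1
  · simp [hp1]
  · exact map_aeval_le_iSup_map_pow T S (natDegree_modByMonic_lt _ hp hp1)

end Annihilated

section Diagonal

variable {R ι : Type*} [CommRing R] [Fintype ι] [DecidableEq ι]

theorem aeval_diagonal (d : ι → R) (p : R[X]) :
    aeval (diagonal d) p = diagonal fun i => p.eval (d i) := by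
  simpa [aeval_pi_apply] using aeval_algHom_apply (diagonalAlgHom R) d p

theorem aeval_mulVecLin (A : Matrix ι ι R) (p : R[X]) :
    aeval A.mulVecLin p = (aeval A p).mulVecLin := by
  rw [show A.mulVecLin = toLinAlgEquiv' A from rfl, aeval_algEquiv]
  rfl

theorem aeval_mulVecLin_diagonal_prod_image [DecidableEq R] (d : ι → R) :
    aeval (diagonal d).mulVecLin (∏ c ∈ Finset.univ.image d, (X - C c)) = 0 := by
  rw [aeval_mulVecLin, aeval_diagonal, diagonal_eq_zero.mpr (funext fun i => ?_), mulVecLin_zero]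
  rw [Pi.zero_apply, eval_prod]
  exact Finset.prod_eq_zero (Finset.mem_image_of_mem d (Finset.mem_univ i)) (by simp)

end Diagonal

theorem smallest_invariant_diag_general (n m h : ℕ)
    (d : Fin n → ℂ) (hd : (Set.range d).ncard = h)
    (H : Matrix (Fin n) (Fin m) ℂ) :
    sInf {W : Submodule ℂ (Fin n → ℂ) |
        LinearMap.range H.mulVecLin ≤ W ∧
        Submodule.map (Matrix.diagonal d).mulVecLin W ≤ W} =
      ⨆ k ∈ Finset.range h,
        Submodule.map ((Matrix.diagonal d).mulVecLin ^ k) (LinearMap.range H.mulVecLin) := by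
  classical
  have hdeg : (∏ c ∈ Finset.univ.image d, (X - C c)).natDegree = h := by
    rw [natDegree_finsetProd_X_sub_C_eq_card _ fun c => c, ← hd, ← Set.ncard_coe_finset,
      Finset.coe_image, Finset.coe_univ, Set.image_univ]
  rw [sInf_invariant_eq_iSup_map_pow, iSup_map_pow_eq_of_aeval_eq_zero _ _
    (monic_prod_X_sub_C (fun c => c) _) (aeval_mulVecLin_diagonal_prod_image d), hdeg]

theorem smallest_invariant_diag (n m h : ℕ) (hn : 0 < n) (hm : 0 < m) (hh : 0 < h)
    (d : Fin n → ℂ) (hd : (Set.range d).ncard = h)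
    (H : Matrix (Fin n) (Fin m) ℂ) :
    sInf {W : Submodule ℂ (Fin n → ℂ) |
        LinearMap.range H.mulVecLin ≤ W ∧
        Submodule.map (Matrix.diagonal d).mulVecLin W ≤ W} =
      ⨆ k ∈ Finset.range h,
        Submodule.map ((Matrix.diagonal d).mulVecLin ^ k) (LinearMap.range H.mulVecLin) :=
  smallest_invariant_diag_general n m h d hd H
end

section
/- Let h ≥ 1 and let 𝒱 be the largest output-nulling subspace contained in 𝒮_h (i.e., the sum of all output-nulling subspaces contained in 𝒮_h). Then 𝒱 is a reachability subspace: for every friend F of 𝒱, the smallest (A+BF)-invariant subspace containing 𝒱 ∩ B(ker D) equals 𝒱. -/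
/-!
Let `𝒱` be the largest output-nulling subspace in `𝒮_h`, `F` a friend of `𝒱`, and `ℛ` any
`(A+BF)`-invariant subspace containing `𝒱 ∩ B(ker D)`; one shows `𝒱 ∩ 𝒮_j ⊆ ℛ` for `j ≤ h` by
induction. A point of `𝒱 ∩ 𝒮_{j+1}` is `x = Ay + Bu` with `y ∈ 𝒮_j` and `Cy + Du = 0`.
Maximality forces `y ∈ 𝒱`: otherwise extending `F` by `y ↦ u` would make `𝒱 + span{y}`
output-nulling and still inside `𝒮_h`. Then `x = (A+BF)y + B(u - Fy)`, where `(A+BF)y ∈ ℛ` by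
induction and `B(u - Fy) ∈ 𝒱 ∩ B(ker D)` since `D(u - Fy) = -Cy + Cy = 0`.
-/

open Matrix Submodule

theorem LinearMap.exists_eqOn_and_apply_eq_of_notMem {K E F : Type*} [Field K]
    [AddCommGroup E] [Module K E] [AddCommGroup F] [Module K F]
    (f : E →ₗ[K] F) {V : Submodule K E} {y : E} (hy : y ∉ V) (u : F) :
    ∃ g : E →ₗ[K] F, (∀ v ∈ V, g v = f v) ∧ g y = u := by
  obtain ⟨φ, hφy, hφV⟩ := V.exists_dual_map_eq_bot_of_notMem hy inferInstance
  refine ⟨f + (φ y)⁻¹ • φ.smulRight (u - f y), fun v hv => ?_, ?_⟩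
  · have hφv : φ v = 0 := by simpa using (le_ker_iff_map.mpr hφV) hv
    simp [hφv]
  · simp [hφy]

theorem Matrix.exists_mulVec_eqOn_and_mulVec_eq_of_notMem {K m n : Type*} [Field K] [Fintype n]
    [DecidableEq n] (F : Matrix m n K) {V : Submodule K (n → K)} {y : n → K} (hy : y ∉ V)
    (u : m → K) : ∃ F' : Matrix m n K, (∀ v ∈ V, F' *ᵥ v = F *ᵥ v) ∧ F' *ᵥ y = u := by
  obtain ⟨g, hgV, hgy⟩ := F.mulVecLin.exists_eqOn_and_apply_eq_of_notMem hy u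
  refine ⟨LinearMap.toMatrix' g, fun v hv => ?_, ?_⟩
  · simpa using hgV v hv
  · simpa using hgy

section OutputNulling

variable {n m p : ℕ} {A : Matrix (Fin n) (Fin n) ℂ} {B : Matrix (Fin n) (Fin m) ℂ}
  {C : Matrix (Fin p) (Fin n) ℂ} {D : Matrix (Fin p) (Fin m) ℂ}

theorem isOutputNulling_sup_span_singleton {V : Submodule ℂ (Fin n → ℂ)}
    {F : Matrix (Fin m) (Fin n) ℂ} (hFinv : ∀ x ∈ V, (A + B * F).mulVecLin x ∈ V)
    (hFker : V ≤ LinearMap.ker (C + D * F).mulVecLin) {y : Fin n → ℂ} {u : Fin m → ℂ}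
    (hAB : A *ᵥ y + B *ᵥ u ∈ V) (hCD : C *ᵥ y + D *ᵥ u = 0) :
    IsOutputNulling A B C D (V ⊔ ℂ ∙ y) := by
  by_cases hy : y ∈ V
  · rw [sup_eq_left.mpr ((span_singleton_le_iff_mem y V).mpr hy)]
    exact ⟨F, hFinv, hFker⟩
  obtain ⟨F', hF'V, hF'y⟩ := F.exists_mulVec_eqOn_and_mulVec_eq_of_notMem hy u
  have hF'v (v) (hv : v ∈ V) (c : ℂ) :
      (A + B * F') *ᵥ (v + c • y) = (A + B * F) *ᵥ v + c • (A *ᵥ y + B *ᵥ u) ∧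
      (C + D * F') *ᵥ (v + c • y) = (C + D * F) *ᵥ v + c • (C *ᵥ y + D *ᵥ u) := by
    simp only [add_mulVec, ← mulVec_mulVec, mulVec_add, mulVec_smul, hF'V v hv, hF'y, smul_add,
      and_self]
  refine ⟨F', ?_, ?_⟩ <;>
    rintro _ hz <;> obtain ⟨v, hv, _, hw, rfl⟩ := mem_sup.mp hz <;>
    obtain ⟨c, rfl⟩ := mem_span_singleton.mp hw
  · rw [mulVecLin_apply, (hF'v v hv c).1]
    exact mem_sup_left (V.add_mem (hFinv v hv) (V.smul_mem c hAB))
  · rw [LinearMap.mem_ker, mulVecLin_apply, (hF'v v hv c).2, hCD, smul_zero, add_zero]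
    exact hFker hv

theorem mulVec_add_mulVec_sub_mem_map_ker {F : Matrix (Fin m) (Fin n) ℂ} {y : Fin n → ℂ}
    {u : Fin m → ℂ} (hFy : (C + D * F) *ᵥ y = 0) (hCD : C *ᵥ y + D *ᵥ u = 0) :
    A *ᵥ y + B *ᵥ u - (A + B * F) *ᵥ y ∈ map B.mulVecLin (LinearMap.ker D.mulVecLin) := by
  refine ⟨u - F *ᵥ y, ?_, ?_⟩
  · rw [SetLike.mem_coe, LinearMap.mem_ker, mulVecLin_apply, mulVec_sub]
    rw [add_mulVec, ← mulVec_mulVec] at hFy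
    linear_combination (norm := module) hCD - hFy
  · simp only [mulVecLin_apply, mulVec_sub, add_mulVec, ← mulVec_mulVec]
    abel

variable (A B C D) in
noncomputable def largestOutputNullingIn (S : Submodule ℂ (Fin n → ℂ)) :
    Submodule ℂ (Fin n → ℂ) :=
  sSup {W | IsOutputNulling A B C D W ∧ W ≤ S}

theorem largestOutputNullingIn_le (S : Submodule ℂ (Fin n → ℂ)) :
    largestOutputNullingIn A B C D S ≤ S :=
  sSup_le fun _ hW => hW.2

theorem le_largestOutputNullingIn {S W : Submodule ℂ (Fin n → ℂ)}
    (hW : IsOutputNulling A B C D W) (hWS : W ≤ S) : W ≤ largestOutputNullingIn A B C D S :=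
  le_sSup ⟨hW, hWS⟩

theorem mem_largestOutputNullingIn_of_successor_mem {S : Submodule ℂ (Fin n → ℂ)}
    {F : Matrix (Fin m) (Fin n) ℂ}
    (hFinv : ∀ x ∈ largestOutputNullingIn A B C D S,
      (A + B * F).mulVecLin x ∈ largestOutputNullingIn A B C D S)
    (hFker : largestOutputNullingIn A B C D S ≤ LinearMap.ker (C + D * F).mulVecLin)
    {y : Fin n → ℂ} {u : Fin m → ℂ} (hyS : y ∈ S)
    (hAB : A *ᵥ y + B *ᵥ u ∈ largestOutputNullingIn A B C D S) (hCD : C *ᵥ y + D *ᵥ u = 0) :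
    y ∈ largestOutputNullingIn A B C D S :=
  have hle := le_largestOutputNullingIn (isOutputNulling_sup_span_singleton hFinv hFker hAB hCD)
    (sup_le (largestOutputNullingIn_le S) ((span_singleton_le_iff_mem y S).mpr hyS))
  hle (mem_sup_right (mem_span_singleton_self y))

variable (A B C D) in
theorem sSeq_mono : Monotone (sSeq A B C D) := by
  refine monotone_nat_of_le_succ fun j => ?_
  induction j with
  | zero => exact bot_le
  | succ k ih => exact map_mono (inf_le_inf_right _ (prod_mono ih le_rfl))

theorem mem_sSeq_succ_iff {j : ℕ} {x : Fin n → ℂ} :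
    x ∈ sSeq A B C D (j + 1) ↔
      ∃ y ∈ sSeq A B C D j, ∃ u, C *ᵥ y + D *ᵥ u = 0 ∧ A *ᵥ y + B *ᵥ u = x := by
  simp [sSeq, and_assoc]

theorem largestOutputNullingIn_inf_sSeq_le {h : ℕ} {F : Matrix (Fin m) (Fin n) ℂ}
    (hFinv : ∀ x ∈ largestOutputNullingIn A B C D (sSeq A B C D h),
      (A + B * F).mulVecLin x ∈ largestOutputNullingIn A B C D (sSeq A B C D h))
    (hFker : largestOutputNullingIn A B C D (sSeq A B C D h) ≤
      LinearMap.ker (C + D * F).mulVecLin)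
    {R : Submodule ℂ (Fin n → ℂ)}
    (hR : largestOutputNullingIn A B C D (sSeq A B C D h) ⊓
      map B.mulVecLin (LinearMap.ker D.mulVecLin) ≤ R)
    (hRinv : map (A + B * F).mulVecLin R ≤ R) :
    ∀ j ≤ h, largestOutputNullingIn A B C D (sSeq A B C D h) ⊓ sSeq A B C D j ≤ R := by
  intro j
  induction j with
  | zero => simp [sSeq]
  | succ j ih =>
    rintro hj x ⟨hxV, hxS⟩
    obtain ⟨y, hyS, u, hCD, rfl⟩ := mem_sSeq_succ_iff.mp hxS
    have hyV := mem_largestOutputNullingIn_of_successor_mem hFinv hFker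
      (sSeq_mono A B C D (j.le_succ.trans hj) hyS) hxV hCD
    have hyR : y ∈ R := ih (j.le_succ.trans hj) ⟨hyV, hyS⟩
    have hcorr := mulVec_add_mulVec_sub_mem_map_ker (A := A) (B := B) (hFker hyV) hCD
    rw [← sub_add_cancel (A *ᵥ y + B *ᵥ u) ((A + B * F) *ᵥ y)]
    exact R.add_mem (hR ⟨sub_mem hxV (hFinv y hyV), hcorr⟩) (hRinv (mem_map_of_mem hyR))

end OutputNulling

theorem largest_output_nulling_in_sSeq_is_reachability_general (n m p : ℕ)
    (A : Matrix (Fin n) (Fin n) ℂ) (B : Matrix (Fin n) (Fin m) ℂ)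
    (C : Matrix (Fin p) (Fin n) ℂ) (D : Matrix (Fin p) (Fin m) ℂ)
    (h : ℕ)
    (V : Submodule ℂ (Fin n → ℂ))
    (hV : V = sSup {W : Submodule ℂ (Fin n → ℂ) |
      IsOutputNulling A B C D W ∧ W ≤ sSeq A B C D h}) :
    ∀ F : Matrix (Fin m) (Fin n) ℂ,
      (∀ x ∈ V, (A + B * F).mulVecLin x ∈ V) →
      V ≤ LinearMap.ker (C + D * F).mulVecLin →
      sInf {W : Submodule ℂ (Fin n → ℂ) |
          V ⊓ Submodule.map B.mulVecLin (LinearMap.ker D.mulVecLin) ≤ W ∧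
          Submodule.map (A + B * F).mulVecLin W ≤ W} = V := by
  intro F hFinv hFker
  change V = largestOutputNullingIn A B C D (sSeq A B C D h) at hV
  subst hV
  refine le_antisymm (sInf_le ⟨inf_le_left, map_le_iff_le_comap.mpr hFinv⟩) (le_sInf ?_)
  rintro R ⟨hR, hRinv⟩
  have hVR := largestOutputNullingIn_inf_sSeq_le hFinv hFker hR hRinv h le_rfl
  rwa [inf_eq_left.mpr (largestOutputNullingIn_le _)] at hVR

theorem largest_output_nulling_in_sSeq_is_reachability (n m p : ℕ)
    (hn : 0 < n) (hm : 0 < m) (hp : 0 < p)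
    (A : Matrix (Fin n) (Fin n) ℂ) (B : Matrix (Fin n) (Fin m) ℂ)
    (C : Matrix (Fin p) (Fin n) ℂ) (D : Matrix (Fin p) (Fin m) ℂ)
    (h : ℕ) (hh : 1 ≤ h)
    (V : Submodule ℂ (Fin n → ℂ))
    (hV : V = sSup {W : Submodule ℂ (Fin n → ℂ) |
      IsOutputNulling A B C D W ∧ W ≤ sSeq A B C D h}) :
    ∀ F : Matrix (Fin m) (Fin n) ℂ,
      (∀ x ∈ V, (A + B * F).mulVecLin x ∈ V) →
      V ≤ LinearMap.ker (C + D * F).mulVecLin →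
      sInf {W : Submodule ℂ (Fin n → ℂ) |
          V ⊓ Submodule.map B.mulVecLin (LinearMap.ker D.mulVecLin) ≤ W ∧
          Submodule.map (A + B * F).mulVecLin W ≤ W} = V :=
  largest_output_nulling_in_sSeq_is_reachability_general n m p A B C D h V hV
end

section
/- Let h ≥ 1 and let μ_1, …, μ_h ∈ ℂ. Define the h×h complex matrix R̄ whose (i,k) entry (for 1 ≤ i,k ≤ h) is e_{h−i}(μ_1, …, μ_{k−1}, μ_{k+1}, …, μ_h), the elementary symmetric polynomial of degree h−i evaluated at the h−1 values {μ_ℓ : ℓ ≠ k} (so the last row, i = h, consists entirely of ones). Then det R̄ = ∏_{1 ≤ i < j ≤ h} (μ_j − μ_i). -/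
/-!
Since `e_d(μ without μ_k) = ∑_j (-μ_k)^j e_{d-j}(μ)`, the `k`-th column of the matrix consists
of the values at `μ_k` of polynomials `p_d` of degree `d` with leading coefficient `(-1)^d`,
listed in decreasing degree. After transposing and reversing the columns, the matrix is the
Vandermonde matrix of `μ` times an upper triangular matrix with diagonal `(-1)^d`, and the sign
of the reversal permutation cancels the product of these diagonal entries.
-/

open Matrix Finset Polynomial

namespace Multiset

variable {R : Type*}

theorem esymm_cons_succ [CommSemiring R] (a : R) (s : Multiset R) (m : ℕ) :
    (a ::ₘ s).esymm (m + 1) = s.esymm (m + 1) + a * s.esymm m := by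
  simp only [esymm, powersetCard_cons, map_add, sum_add, map_map, Function.comp_def, prod_cons,
    sum_map_mul_left]

theorem esymm_eq_sum_esymm_cons [CommRing R] (a : R) (s : Multiset R) (m : ℕ) :
    s.esymm m = ∑ j ∈ Finset.range (m + 1), (-a) ^ j * (a ::ₘ s).esymm (m - j) := by
  induction m with
  | zero => simp [esymm]
  | succ m ih =>
    rw [Finset.sum_range_succ', pow_zero, one_mul, Nat.sub_zero, esymm_cons_succ]
    simp only [Nat.succ_sub_succ, pow_succ, mul_comm _ (-a), mul_assoc, ← Finset.mul_sum, ← ih]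
    ring

noncomputable def esymmErasePoly [CommRing R] (s : Multiset R) (d : ℕ) : R[X] :=
  ∑ j ∈ Finset.range (d + 1), C ((-1) ^ j * s.esymm (d - j)) * X ^ j

theorem eval_esymmErasePoly_cons [CommRing R] (a : R) (s : Multiset R) (d : ℕ) :
    ((a ::ₘ s).esymmErasePoly d).eval a = s.esymm d := by
  rw [esymm_eq_sum_esymm_cons a, esymmErasePoly, eval_finsetSum]
  refine Finset.sum_congr rfl fun j _ => ?_
  rw [eval_mul, eval_C, eval_pow, eval_X, neg_pow]
  ring

theorem natDegree_esymmErasePoly_le [CommRing R] (s : Multiset R) (d : ℕ) :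
    (s.esymmErasePoly d).natDegree ≤ d :=
  natDegree_sum_le_of_forall_le _ _ fun j hj =>
    (natDegree_C_mul_X_pow_le _ j).trans (Nat.lt_succ_iff.mp (Finset.mem_range.mp hj))

theorem coeff_esymmErasePoly_self [CommRing R] (s : Multiset R) (d : ℕ) :
    (s.esymmErasePoly d).coeff d = (-1) ^ d := by
  rw [esymmErasePoly, finsetSum_coeff,
    Finset.sum_eq_single_of_mem d (Finset.self_mem_range_succ d)]
  · rw [coeff_C_mul_X_pow, if_pos rfl, Nat.sub_self]
    simp [esymm]
  · intro j _ hj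
    rw [coeff_C_mul_X_pow, if_neg (Ne.symm hj)]

end Multiset

theorem Fin.sign_revPerm (n : ℕ) :
    Equiv.Perm.sign (Fin.revPerm : Equiv.Perm (Fin n)) = ∏ i : Fin n, (-1) ^ (i : ℕ) := by
  induction n with
  | zero => rfl
  | succ n ih =>
    have hdecomp : (Fin.revPerm : Equiv.Perm (Fin (n + 1))) =
        Equiv.Perm.decomposeFin.symm (0, Fin.revPerm) * finRotate (n + 1) := by
      ext i
      induction i using Fin.lastCases with
      | last => simp
      | cast j => simp [Fin.rev_castSucc, Fin.coeSucc_eq_succ]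
    rw [hdecomp, map_mul, Equiv.Perm.decomposeFin.symm_sign, if_pos rfl, one_mul, ih,
      sign_finRotate, Fin.prod_univ_castSucc]
    simp

theorem Matrix.det_eval_matrixOfPolynomials {R : Type*} [CommRing R] {n : ℕ} (v : Fin n → R)
    (p : Fin n → R[X]) (h_deg : ∀ i, (p i).natDegree ≤ i) :
    (Matrix.of fun i j => (p j).eval (v i)).det = (∏ i, (p i).coeff i) * (vandermonde v).det := by
  rw [eval_matrixOfPolynomials_eq_vandermonde_mul_matrixOfPolynomials v p h_deg, det_mul,
    det_of_isUpperTriangular (matrixOfPolynomials_blockTriangular p h_deg), mul_comm]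
  rfl

theorem det_esymm_matrix_general (h : ℕ) (μ : Fin h → ℂ) :
    Matrix.det (Matrix.of fun i k : Fin h =>
        (((Finset.univ.erase k).val.map μ).esymm (h - 1 - (i : ℕ)))) =
      ∏ i : Fin h, ∏ j ∈ Finset.Ioi i, (μ j - μ i) := by
  set p : Fin h → ℂ[X] := fun i => (Finset.univ.val.map μ).esymmErasePoly i
  have hcons (k : Fin h) :
      Finset.univ.val.map μ = μ k ::ₘ (Finset.univ.erase k).val.map μ := by
    rw [← Multiset.map_cons, Finset.erase_val, Multiset.cons_erase (Finset.mem_univ_val k)]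
  have htranspose : (Matrix.of fun i k : Fin h =>
        (((Finset.univ.erase k).val.map μ).esymm (h - 1 - (i : ℕ))))ᵀ =
      (Matrix.of fun k i => (p i).eval (μ k)).submatrix id Fin.revPerm := by
    ext k i
    simp only [transpose_apply, of_apply, submatrix_apply, id_eq, Fin.revPerm_apply, p, hcons k,
      Multiset.eval_esymmErasePoly_cons, Fin.val_rev]
    congr 1
    omega
  have hsign : ((Equiv.Perm.sign (Fin.revPerm : Equiv.Perm (Fin h)) : ℤ) : ℂ) *
      ∏ i : Fin h, (p i).coeff i = 1 := by
    simp only [Fin.sign_revPerm, p, Multiset.coeff_esymmErasePoly_self]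
    push_cast
    rw [← Finset.prod_mul_distrib]
    exact Finset.prod_eq_one fun i _ => by
      rw [← pow_add, ← two_mul, pow_mul, neg_one_sq, one_pow]
  rw [← det_transpose, htranspose, det_permute',
    det_eval_matrixOfPolynomials μ p fun i => Multiset.natDegree_esymmErasePoly_le _ _,
    ← mul_assoc, hsign, one_mul, det_vandermonde]

theorem det_esymm_matrix (h : ℕ) (hh : 1 ≤ h) (μ : Fin h → ℂ) :
    Matrix.det (Matrix.of fun i k : Fin h =>
        (((Finset.univ.erase k).val.map μ).esymm (h - 1 - (i : ℕ)))) =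
      ∏ i : Fin h, ∏ j ∈ Finset.Ioi i, (μ j - μ i) :=
  det_esymm_matrix_general h μ
end
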